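/- Let X ~ Sk(0, σ²) be a Skellam random variable. Then for any p ∈ (0,1], with probability at least 1 − p, |X| ≤ 2σ√(log(2/p)) + √2 log(2/p). -/

import Mathlib

open MeasureTheory ProbabilityTheory NNReal

/-!
Both Poisson factors contribute `exp (v/2 * (exp (±c) - 1))` to the moment generating function,
so `Sk(0, σ²)` has MGF `exp (σ² (cosh c - 1))`, and the Chernoff bound on both tails gives
`P(|X| ≥ t) ≤ 2 exp (σ² (cosh l - 1) - l t)` for every `l ≥ 0`.
Since `cosh x ≤ exp (x² / 2)` and `exp y - 1 ≤ 2 y` on `[0, 1]`, we have `cosh l - 1 ≤ l²`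
for `l² ≤ 2`. With `L = log (2 / p)`, taking `l = √2` if `√2 σ ≤ √L` and `l = √L / σ`
otherwise gives `σ² l² ≤ L` and `l t ≥ 2 L`, so the tail is at most `2 exp (-L) = p`.
-/

/-- The Skellam distribution `Sk(m, v)`: the law of `m + N₁ - N₂` where
`N₁, N₂` are independent `Poisson(v/2)`. -/
noncomputable def skellamMeasure (m : ℤ) (v : ℝ≥0) : Measure ℤ :=
  Measure.map (fun p : ℕ × ℕ => m + (p.1 : ℤ) - (p.2 : ℤ))
    ((poissonMeasure (v / 2)).prod (poissonMeasure (v / 2)))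

open Real
open scoped Nat

namespace ProbabilityTheory

lemma hasSum_exp_mul_poissonMeasure (r : ℝ≥0) (c : ℝ) :
    HasSum (fun n : ℕ => exp (-r) * r ^ n / n ! * exp (c * n)) (exp (r * (exp c - 1))) := by
  have h := (NormedSpace.expSeries_div_hasSum_exp ((r : ℝ) * exp c)).mul_left (exp (-r))
  rw [← exp_eq_exp_ℝ, ← exp_add, neg_add_eq_sub, ← mul_sub_one (r : ℝ)] at h
  refine h.congr_fun fun n => ?_
  rw [mul_comm c, exp_nat_mul, mul_pow]
  ring

lemma integrable_exp_mul_poissonMeasure (r : ℝ≥0) (c : ℝ) :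
    Integrable (fun n : ℕ => exp (c * n)) (poissonMeasure r) := by
  refine integrable_poissonMeasure_iff.2 ?_
  simpa only [norm_of_nonneg (exp_nonneg _)] using (hasSum_exp_mul_poissonMeasure r c).summable

lemma mgf_poissonMeasure (r : ℝ≥0) (c : ℝ) :
    mgf (fun n : ℕ => (n : ℝ)) (poissonMeasure r) c = exp (r * (exp c - 1)) := by
  rw [mgf, integral_poissonMeasure]
  exact (hasSum_exp_mul_poissonMeasure r c).tsum_eq

instance (m : ℤ) (v : ℝ≥0) : IsProbabilityMeasure (skellamMeasure m v) :=
  Measure.isProbabilityMeasure_map (measurable_of_countable _).aemeasurable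

private lemma exp_mul_add_sub (c : ℝ) (m : ℤ) (p : ℕ × ℕ) :
    exp (c * ((m + (p.1 : ℤ) - (p.2 : ℤ) : ℤ) : ℝ)) =
      exp (c * m) * (exp (c * p.1) * exp (-c * p.2)) := by
  rw [← exp_add, ← exp_add]
  push_cast
  ring_nf

lemma integrable_exp_mul_skellamMeasure (m : ℤ) (v : ℝ≥0) (c : ℝ) :
    Integrable (fun z : ℤ => exp (c * z)) (skellamMeasure m v) := by
  rw [skellamMeasure, integrable_map_measure .of_discrete .of_discrete]
  simp only [Function.comp_def, exp_mul_add_sub]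
  exact ((integrable_exp_mul_poissonMeasure _ c).mul_prod
    (integrable_exp_mul_poissonMeasure _ (-c))).const_mul _

lemma mgf_skellamMeasure (m : ℤ) (v : ℝ≥0) (c : ℝ) :
    mgf (fun z : ℤ => (z : ℝ)) (skellamMeasure m v) c = exp (c * m + v * (cosh c - 1)) := by
  rw [mgf, skellamMeasure, integral_map .of_discrete .of_discrete]
  simp only [exp_mul_add_sub]
  rw [integral_const_mul,
    integral_prod_mul (fun n : ℕ => exp (c * n)) (fun n : ℕ => exp (-c * n))]
  have h₁ := mgf_poissonMeasure (v / 2) c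
  have h₂ := mgf_poissonMeasure (v / 2) (-c)
  rw [mgf] at h₁ h₂
  rw [h₁, h₂, ← exp_add, ← exp_add, cosh_eq]
  push_cast
  ring_nf

lemma measureReal_abs_ge_le_exp_mul_mgf {Ω : Type*} [MeasurableSpace Ω] {μ : Measure Ω}
    [IsFiniteMeasure μ] {X : Ω → ℝ} (ε : ℝ) {t : ℝ} (ht : 0 ≤ t)
    (h_int : Integrable (fun ω => exp (t * X ω)) μ)
    (h_int' : Integrable (fun ω => exp (-t * X ω)) μ) :
    μ.real {ω | ε ≤ |X ω|} ≤ exp (-t * ε) * (mgf X μ t + mgf X μ (-t)) := by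
  have h_split : {ω | ε ≤ |X ω|} = {ω | ε ≤ X ω} ∪ {ω | X ω ≤ -ε} := by
    ext ω
    simp only [Set.mem_ofPred_eq, Set.mem_union, le_abs', or_comm]
  have h_lower := measure_le_le_exp_mul_mgf (μ := μ) (-ε) (neg_nonpos.2 ht) h_int'
  rw [neg_mul_neg] at h_lower
  rw [h_split, mul_add]
  exact (measureReal_union_le _ _).trans
    (add_le_add (measure_ge_le_exp_mul_mgf ε ht h_int) h_lower)

end ProbabilityTheory

lemma Real.cosh_sub_one_le_sq {x : ℝ} (hx : x ^ 2 ≤ 2) : cosh x - 1 ≤ x ^ 2 := by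
  have hx' : 0 ≤ x ^ 2 / 2 := by positivity
  have h := abs_exp_sub_one_le (x := x ^ 2 / 2) (by rw [abs_of_nonneg hx']; linarith)
  rw [abs_of_nonneg hx', abs_of_nonneg (sub_nonneg.2 (one_le_exp hx'))] at h
  linarith [cosh_le_exp_half_sq x]

lemma exists_skellam_chernoff_exponent {σ L : ℝ} (hσ : 0 ≤ σ) (hL : 0 ≤ L) :
    ∃ l, 0 ≤ l ∧ σ ^ 2 * (cosh l - 1) - l * (2 * σ * √L + √2 * L) ≤ -L := by
  have h2 : √2 ^ 2 = 2 := sq_sqrt zero_le_two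
  have hLL : √L ^ 2 = L := sq_sqrt hL
  by_cases hσL : √2 * σ ≤ √L
  · refine ⟨√2, sqrt_nonneg 2, ?_⟩
    have hc := cosh_sub_one_le_sq h2.le
    have hσ2 : σ ^ 2 * 2 ≤ L := by
      nlinarith [mul_self_le_mul_self (by positivity) hσL]
    rw [h2] at hc
    nlinarith [mul_le_mul_of_nonneg_left hc (sq_nonneg σ),
      mul_nonneg (mul_nonneg (sqrt_nonneg 2) hσ) (sqrt_nonneg L)]
  · push Not at hσL
    have hσ0 : 0 < σ := by
      by_contra h
      nlinarith [sqrt_nonneg L, sqrt_nonneg 2]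
    refine ⟨√L / σ, by positivity, ?_⟩
    have hl : (√L / σ) ^ 2 = L / σ ^ 2 := by rw [div_pow, hLL]
    have hc := cosh_sub_one_le_sq (x := √L / σ) (by
      rw [hl, div_le_iff₀ (by positivity)]; nlinarith [sqrt_nonneg L, sqrt_nonneg 2])
    rw [hl] at hc
    have hσl : σ ^ 2 * (L / σ ^ 2) = L := by field_simp
    have hlt : √L / σ * (2 * σ * √L) = 2 * L := by field_simp; exact hLL
    nlinarith [mul_le_mul_of_nonneg_left hc (sq_nonneg σ),
      mul_nonneg (div_nonneg (sqrt_nonneg L) hσ0.le) (mul_nonneg (sqrt_nonneg 2) hL)]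

lemma mgf_skellamMeasure_zero (v : ℝ≥0) (c : ℝ) :
    mgf (fun z : ℤ => (z : ℝ)) (skellamMeasure 0 v) c = exp (v * (cosh c - 1)) := by
  rw [mgf_skellamMeasure, Int.cast_zero, mul_zero, zero_add]

lemma skellamMeasure_real_abs_ge_le (σ : ℝ≥0) {L : ℝ} (hL : 0 ≤ L) :
    (skellamMeasure 0 (σ ^ 2)).real {z | 2 * σ * √L + √2 * L ≤ |(z : ℝ)|} ≤
      2 * exp (-L) := by
  obtain ⟨l, hl, hlL⟩ := exists_skellam_chernoff_exponent σ.2 hL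
  calc _ ≤ exp (-l * (2 * σ * √L + √2 * L)) *
        (mgf (fun z : ℤ => (z : ℝ)) (skellamMeasure 0 (σ ^ 2)) l +
          mgf (fun z : ℤ => (z : ℝ)) (skellamMeasure 0 (σ ^ 2)) (-l)) :=
        measureReal_abs_ge_le_exp_mul_mgf _ hl (integrable_exp_mul_skellamMeasure 0 _ l)
          (integrable_exp_mul_skellamMeasure 0 _ (-l))
    _ = 2 * exp (σ ^ 2 * (cosh l - 1) - l * (2 * σ * √L + √2 * L)) := by
        rw [mgf_skellamMeasure_zero, mgf_skellamMeasure_zero, cosh_neg, ← two_mul, mul_left_comm,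
          ← exp_add, NNReal.coe_pow, neg_mul, neg_add_eq_sub]
    _ ≤ 2 * exp (-L) := by gcongr; exact hlL

theorem skellam_tail_bound_general
    {Ω : Type*} [MeasurableSpace Ω] (μ : Measure Ω) [IsProbabilityMeasure μ]
    (X : Ω → ℤ) (hX : Measurable X) (σ : ℝ≥0)
    (hXd : Measure.map X μ = skellamMeasure 0 (σ ^ 2)) :
    ∀ p : ℝ, p ∈ Set.Ioc (0 : ℝ) 1 →
      ENNReal.ofReal (1 - p) ≤
        μ {ω | (|X ω| : ℝ) ≤ 2 * σ * Real.sqrt (Real.log (2 / p))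
              + Real.sqrt 2 * Real.log (2 / p)} := by
  rintro p ⟨hp0, hp1⟩
  set L := log (2 / p)
  set S := {z : ℤ | |(z : ℝ)| ≤ 2 * σ * √L + √2 * L}
  have hL : 0 ≤ L := log_nonneg (by rw [le_div_iff₀ hp0]; linarith)
  have htail : (skellamMeasure 0 (σ ^ 2)).real Sᶜ ≤ p := by
    have hsub : Sᶜ ⊆ {z : ℤ | 2 * σ * √L + √2 * L ≤ |(z : ℝ)|} := by
      simp only [S, Set.compl_ofPred, not_le, Set.ofPred_subset_ofPred]
      exact fun _ => le_of_lt
    refine (measureReal_mono hsub).trans ((skellamMeasure_real_abs_ge_le σ hL).trans_eq ?_)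
    rw [exp_neg, exp_log (by positivity), inv_div]
    ring
  have hmap : μ (X ⁻¹' S) = skellamMeasure 0 (σ ^ 2) S := by
    rw [← hXd, Measure.map_apply hX .of_discrete]
  rw [probReal_compl_eq_one_sub .of_discrete] at htail
  calc ENNReal.ofReal (1 - p) ≤ ENNReal.ofReal ((skellamMeasure 0 (σ ^ 2)).real S) :=
        ENNReal.ofReal_le_ofReal (by linarith)
    _ = μ (X ⁻¹' S) := by rw [ofReal_measureReal, hmap]

theorem skellam_tail_bound
    {Ω : Type*} [MeasurableSpace Ω] (μ : Measure Ω) [IsProbabilityMeasure μ]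
    (X : Ω → ℤ) (hX : Measurable X) (σ : ℝ≥0) (hσ : 0 < σ)
    (hXd : Measure.map X μ = skellamMeasure 0 (σ ^ 2)) :
    ∀ p : ℝ, p ∈ Set.Ioc (0 : ℝ) 1 →
      ENNReal.ofReal (1 - p) ≤
        μ {ω | (|X ω| : ℝ) ≤ 2 * σ * Real.sqrt (Real.log (2 / p))
              + Real.sqrt 2 * Real.log (2 / p)} :=
  skellam_tail_bound_general μ X hX σ hXd
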